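/- Let r = √((N−1)/N) and θ = arcsin(1/√N) for N ≥ 2, and T = r·R_θ : ℝ² → ℝ² with R_θ the rotation by θ. Then for any unit vector w¹, the residual after N iterations attains exactly the value (N−1)^{N−1}/N^N, namely ‖T^N w¹ − T^{N−1} w¹‖² = r^{2(N−1)}·(r² + 1 − 2r·cos θ) = r^{2(N−1)}·(1/N) = (N−1)^{N−1}/N^N. -/
import Mathlib


/-- The planar rotation by angle `θ` on `EuclideanSpace ℝ (Fin 2)`. -/
noncomputable def rot2 (θ : ℝ) (x : EuclideanSpace ℝ (Fin 2)) : EuclideanSpace ℝ (Fin 2) :=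
  (WithLp.equiv 2 (Fin 2 → ℝ)).symm
    ![Real.cos θ * x 0 - Real.sin θ * x 1, Real.sin θ * x 0 + Real.cos θ * x 1]

lemma normsq2 (x : EuclideanSpace ℝ (Fin 2)) : ‖x‖ ^ 2 = x 0 ^ 2 + x 1 ^ 2 := by
  rw [EuclideanSpace.norm_eq, Real.sq_sqrt (by positivity)]
  simp [Fin.sum_univ_two, sq_abs]

lemma rot2_apply0 (θ : ℝ) (x : EuclideanSpace ℝ (Fin 2)) :
    rot2 θ x 0 = Real.cos θ * x 0 - Real.sin θ * x 1 := rfl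

lemma rot2_apply1 (θ : ℝ) (x : EuclideanSpace ℝ (Fin 2)) :
    rot2 θ x 1 = Real.sin θ * x 0 + Real.cos θ * x 1 := rfl

lemma step_normsq (r θ : ℝ) (v : EuclideanSpace ℝ (Fin 2)) :
    ‖r • rot2 θ v - v‖ ^ 2 = (r ^ 2 + 1 - 2 * r * Real.cos θ) * ‖v‖ ^ 2 := by
  have h0 : (r • rot2 θ v - v) 0 = r * (Real.cos θ * v 0 - Real.sin θ * v 1) - v 0 := rfl
  have h1 : (r • rot2 θ v - v) 1 = r * (Real.sin θ * v 0 + Real.cos θ * v 1) - v 1 := rfl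
  rw [normsq2, normsq2, h0, h1]
  have hcs := Real.sin_sq_add_cos_sq θ
  linear_combination (r ^ 2 * (v 0 ^ 2 + v 1 ^ 2)) * hcs

lemma norm_iter (r θ : ℝ) (hr : 0 ≤ r)
    (T : EuclideanSpace ℝ (Fin 2) → EuclideanSpace ℝ (Fin 2))
    (hT : ∀ x, T x = r • rot2 θ x)
    (w : EuclideanSpace ℝ (Fin 2)) (k : ℕ) : ‖T^[k] w‖ = r ^ k * ‖w‖ := by
  induction k with
  | zero => simp
  | succ n ih =>
    rw [Function.iterate_succ_apply', hT, norm_smul]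
    have hrot : ‖rot2 θ (T^[n] w)‖ = ‖T^[n] w‖ := by
      have := normsq2 (rot2 θ (T^[n] w))
      rw [rot2_apply0, rot2_apply1] at this
      have h2 : ‖rot2 θ (T^[n] w)‖ ^ 2 = ‖T^[n] w‖ ^ 2 := by
        rw [this, normsq2]
        nlinarith [Real.sin_sq_add_cos_sq θ]
      rw [← Real.sqrt_sq (norm_nonneg (rot2 θ (T^[n] w))), ← Real.sqrt_sq (norm_nonneg (T^[n] w)), h2]
    rw [hrot, ih, Real.norm_eq_abs, abs_of_nonneg hr]
    ring

theorem stmt17 (N : ℕ) (hN : 2 ≤ N)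
    (r θ : ℝ) (hr : r = Real.sqrt (((N : ℝ) - 1) / N))
    (hθ : θ = Real.arcsin (1 / Real.sqrt N))
    (T : EuclideanSpace ℝ (Fin 2) → EuclideanSpace ℝ (Fin 2))
    (hT : ∀ x, T x = r • rot2 θ x)
    (w1 : EuclideanSpace ℝ (Fin 2)) (hw1 : ‖w1‖ = 1) :
    ‖T^[N] w1 - T^[N - 1] w1‖ ^ 2 = r ^ (2 * (N - 1)) * (r ^ 2 + 1 - 2 * r * Real.cos θ) ∧
    ‖T^[N] w1 - T^[N - 1] w1‖ ^ 2 = r ^ (2 * (N - 1)) * (1 / N) ∧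
    ‖T^[N] w1 - T^[N - 1] w1‖ ^ 2 = ((N - 1 : ℕ) ^ (N - 1 : ℕ) : ℝ) / (N : ℝ) ^ N := by
  have hNpos : (0 : ℝ) < N := by positivity
  have hN1 : (0 : ℝ) ≤ (N : ℝ) - 1 := by
    have : (2 : ℝ) ≤ N := by exact_mod_cast hN
    linarith
  have hr0 : 0 ≤ r := hr ▸ Real.sqrt_nonneg _
  have hr2 : r ^ 2 = ((N : ℝ) - 1) / N := by
    rw [hr, Real.sq_sqrt (by positivity)]
  have hcos : Real.cos θ = r := by
    rw [hθ, Real.cos_arcsin, hr]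
    congr 1
    rw [div_pow, one_pow, Real.sq_sqrt hNpos.le]
    field_simp
  -- main computation
  have hstep : ‖T^[N] w1 - T^[N - 1] w1‖ ^ 2
      = (r ^ 2 + 1 - 2 * r * Real.cos θ) * ‖T^[N - 1] w1‖ ^ 2 := by
    have : T^[N] w1 = T (T^[N - 1] w1) := by
      conv_lhs => rw [show N = (N - 1) + 1 by omega]
      rw [Function.iterate_succ_apply']
    rw [this, hT]
    exact step_normsq r θ _
  have hnorm : ‖T^[N - 1] w1‖ ^ 2 = r ^ (2 * (N - 1)) := by
    rw [norm_iter r θ hr0 T hT w1 (N - 1), hw1, mul_one, ← pow_mul, mul_comm]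
  have e1 : ‖T^[N] w1 - T^[N - 1] w1‖ ^ 2
      = r ^ (2 * (N - 1)) * (r ^ 2 + 1 - 2 * r * Real.cos θ) := by
    rw [hstep, hnorm]; ring
  have hval : r ^ 2 + 1 - 2 * r * Real.cos θ = 1 / N := by
    rw [hcos]
    have h := hr2
    field_simp at h ⊢
    nlinarith [h]
  refine ⟨e1, ?_, ?_⟩
  · rw [e1, hval]
  · rw [e1, hval, pow_mul, hr2]
    have hcast : ((N - 1 : ℕ) : ℝ) = (N : ℝ) - 1 := by
      have : 1 ≤ N := by omega
      push_cast [this]; ring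
    have hNN : (N : ℝ) ^ N = (N : ℝ) ^ (N - 1) * N := by
      rw [← pow_succ, show (N - 1) + 1 = N from by omega]
    rw [div_pow, hcast, hNN]
    have hNne : ((N : ℝ) ^ (N - 1)) ≠ 0 := by positivity
    field_simp
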